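/- For the rescaled mass-shell relation p⁰ = N⁻¹(1−|X̂|²_g)⁻¹[τ⟨X̂,p⟩_g + √(τ²⟨X̂,p⟩_g² + (1−|X̂|²_g)(1+τ²|p|²_g))] with 0 < N and |X̂|_g < 1, the pointwise estimate |p|_g/p⁰ ≤ 2|X|_g|τ|⁻¹ + N√(1−|X̂|²_g)·|τ|⁻¹ holds. -/
import Mathlib


open scoped InnerProductSpace

private lemma mass_shell_aux (x q t τ N s r u d a p0 : ℝ)
    (ht : 0 < t) (hq0 : 0 ≤ q) (hx0 : 0 ≤ x) (hN : 0 < N) (hs : 0 < s)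
    (hr0 : 0 ≤ r) (hr2 : r ^ 2 = s) (hu0 : 0 ≤ u) (hu2 : u ^ 2 = 1 + τ ^ 2 * q ^ 2)
    (ht2 : t ^ 2 = τ ^ 2) (hd0 : 0 ≤ d)
    (hd2 : d ^ 2 = τ ^ 2 * a ^ 2 + s * (1 + τ ^ 2 * q ^ 2))
    (hcs : |a| ≤ x / N * q)
    (hp0 : p0 = N⁻¹ * s⁻¹ * (τ * a + d)) :
    q / p0 ≤ 2 * x * t⁻¹ + N * r * t⁻¹ := by
  have ht' : t = |τ| := by rw [← Real.sqrt_sq ht.le, ht2, Real.sqrt_sq_eq_abs]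
  have hcsN : N * |a| ≤ x * q := by
    rw [div_mul_eq_mul_div, le_div_iff₀ hN] at hcs
    linarith
  have htaa : (t * |a|) ^ 2 = τ ^ 2 * a ^ 2 := by rw [mul_pow, ht2, sq_abs]
  have hta0 : 0 ≤ t * |a| := mul_nonneg ht.le (abs_nonneg a)
  -- positivity of τ*a + d
  have hta_lt : t * |a| < d := by
    have hsq : (t * |a|) ^ 2 < d ^ 2 := by
      rw [htaa, hd2]; nlinarith [sq_nonneg (τ * q)]
    calc t * |a| = Real.sqrt ((t * |a|) ^ 2) := (Real.sqrt_sq hta0).symm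
      _ < Real.sqrt (d ^ 2) := Real.sqrt_lt_sqrt (by positivity) hsq
      _ = d := Real.sqrt_sq hd0
  have hA : 0 < τ * a + d := by
    have h1 : -(t * |a|) ≤ τ * a := by
      have := neg_abs_le (τ * a)
      have habs : |τ * a| = t * |a| := by rw [abs_mul, ht']
      linarith [habs ▸ this]
    linarith
  -- t q ≤ u
  have htq : t * q ≤ u := by
    have hsq : (t * q) ^ 2 ≤ u ^ 2 := by rw [mul_pow, ht2, hu2]; nlinarith
    calc t * q = Real.sqrt ((t * q) ^ 2) := (Real.sqrt_sq (mul_nonneg ht.le hq0)).symm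
      _ ≤ Real.sqrt (u ^ 2) := Real.sqrt_le_sqrt hsq
      _ = u := Real.sqrt_sq hu0
  -- d ≤ t|a| + r u
  have hru2 : (r * u) ^ 2 = s * (1 + τ ^ 2 * q ^ 2) := by rw [mul_pow, hr2, hu2]
  have hru0 : 0 ≤ r * u := mul_nonneg hr0 hu0
  have hd_le : d ≤ t * |a| + r * u := by
    have hsq : d ^ 2 ≤ (t * |a| + r * u) ^ 2 := by
      have : (t * |a| + r * u) ^ 2 =
          (t * |a|) ^ 2 + (r * u) ^ 2 + 2 * ((t * |a|) * (r * u)) := by ring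
      rw [this, htaa, hru2, hd2]
      nlinarith [mul_nonneg hta0 hru0]
    calc d = Real.sqrt (d ^ 2) := (Real.sqrt_sq hd0).symm
      _ ≤ Real.sqrt ((t * |a| + r * u) ^ 2) := Real.sqrt_le_sqrt hsq
      _ = t * |a| + r * u := Real.sqrt_sq (by positivity)
  -- key pieces
  have h1 : d - τ * a ≤ 2 * (t * |a|) + r * u := by
    have h1' : -(t * |a|) ≤ τ * a := by
      have := neg_abs_le (τ * a)
      have habs : |τ * a| = t * |a| := by rw [abs_mul, ht']
      linarith [habs ▸ this]
    linarith
  have h2 : N * t * q * (d - τ * a) ≤ N * t * q * (2 * (t * |a|) + r * u) :=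
    mul_le_mul_of_nonneg_left h1 (by positivity)
  have h3 : N * t * q * (2 * (t * |a|)) ≤ 2 * x * (τ ^ 2 * q ^ 2) := by
    have h := mul_le_mul_of_nonneg_left hcsN (show (0:ℝ) ≤ 2 * t ^ 2 * q by positivity)
    rw [← ht2]
    linarith [h]
  have h4 : N * t * q * (r * u) ≤ N * r * u ^ 2 := by
    have h := mul_le_mul_of_nonneg_left htq (show (0:ℝ) ≤ N * r * u by positivity)
    linarith [h]
  have hK : N * t * q * (d - τ * a) ≤ (2 * x + N * r) * u ^ 2 := by
    have hx2 : 2 * x * (τ ^ 2 * q ^ 2) ≤ 2 * x * u ^ 2 := by rw [hu2]; linarith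
    linarith [h2, h3, h4, hx2]
  -- product identity
  have hAB : (τ * a + d) * (d - τ * a) = s * u ^ 2 := by
    linear_combination hd2 - s * hu2
  have h5 : N * t * q * ((τ * a + d) * (d - τ * a)) ≤ (2 * x + N * r) * u ^ 2 * (τ * a + d) := by
    linarith [mul_le_mul_of_nonneg_right hK hA.le]
  rw [hAB] at h5
  have hu2pos : (0:ℝ) < u ^ 2 := by rw [hu2]; positivity
  have h6 : (N * s * t * q) * u ^ 2 ≤ ((2 * x + N * r) * (τ * a + d)) * u ^ 2 := by linarith
  have hkey : N * s * t * q ≤ (2 * x + N * r) * (τ * a + d) :=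
    le_of_mul_le_mul_right h6 hu2pos
  -- finish
  have hp0' : p0 = (τ * a + d) / (N * s) := by rw [hp0]; field_simp
  have hlhs : q / p0 = q * (N * s) / (τ * a + d) := by rw [hp0', div_div_eq_mul_div]
  have hrhs : 2 * x * t⁻¹ + N * r * t⁻¹ = (2 * x + N * r) / t := by field_simp
  rw [hlhs, hrhs, div_le_div_iff₀ hA ht]
  linarith [hkey]

/-- Pointwise estimate for the rescaled mass-shell relation:
with `g` a positive-definite inner product on `ℝ³` (modelled by a real inner
product space `V` of dimension 3), `N > 0`, `X̂ = X/N` with `‖X̂‖ < 1`, `τ ≠ 0`,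
and `p⁰ = N⁻¹(1-‖X̂‖²)⁻¹[τ⟨X̂,p⟩ + √(τ²⟨X̂,p⟩² + (1-‖X̂‖²)(1+τ²‖p‖²))]`,
one has `‖p‖/p⁰ ≤ 2‖X‖|τ|⁻¹ + N√(1-‖X̂‖²)|τ|⁻¹`. -/
theorem mass_shell_momentum_ratio_estimate
    {V : Type*} [NormedAddCommGroup V] [InnerProductSpace ℝ V]
    (hdim : Module.finrank ℝ V = 3)
    (p X : V) (N τ : ℝ) (hN : 0 < N) (hτ : τ ≠ 0)
    (Xh : V) (hXh : Xh = N⁻¹ • X) (hXh1 : ‖Xh‖ < 1)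
    (p0 : ℝ)
    (hp0 : p0 = N⁻¹ * (1 - ‖Xh‖ ^ 2)⁻¹ *
      (τ * ⟪Xh, p⟫_ℝ +
        Real.sqrt (τ ^ 2 * ⟪Xh, p⟫_ℝ ^ 2 + (1 - ‖Xh‖ ^ 2) * (1 + τ ^ 2 * ‖p‖ ^ 2)))) :
    ‖p‖ / p0 ≤ 2 * ‖X‖ * |τ|⁻¹ + N * Real.sqrt (1 - ‖Xh‖ ^ 2) * |τ|⁻¹ := by
  have hs : (0:ℝ) < 1 - ‖Xh‖ ^ 2 := by nlinarith [norm_nonneg Xh]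
  have hXhn : ‖Xh‖ = ‖X‖ / N := by
    rw [hXh, norm_smul, norm_inv, Real.norm_eq_abs, abs_of_pos hN]; ring
  have hcs : |⟪Xh, p⟫_ℝ| ≤ ‖X‖ / N * ‖p‖ := by
    calc |⟪Xh, p⟫_ℝ| ≤ ‖Xh‖ * ‖p‖ := abs_real_inner_le_norm Xh p
      _ = ‖X‖ / N * ‖p‖ := by rw [hXhn]
  have hDnn : (0:ℝ) ≤ τ ^ 2 * ⟪Xh, p⟫_ℝ ^ 2 + (1 - ‖Xh‖ ^ 2) * (1 + τ ^ 2 * ‖p‖ ^ 2) := by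
    have : (0:ℝ) ≤ (1 - ‖Xh‖ ^ 2) * (1 + τ ^ 2 * ‖p‖ ^ 2) := by positivity
    nlinarith [sq_nonneg (τ * ⟪Xh, p⟫_ℝ)]
  exact mass_shell_aux ‖X‖ ‖p‖ |τ| τ N (1 - ‖Xh‖ ^ 2)
    (Real.sqrt (1 - ‖Xh‖ ^ 2))
    (Real.sqrt (1 + τ ^ 2 * ‖p‖ ^ 2))
    (Real.sqrt (τ ^ 2 * ⟪Xh, p⟫_ℝ ^ 2 + (1 - ‖Xh‖ ^ 2) * (1 + τ ^ 2 * ‖p‖ ^ 2)))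
    ⟪Xh, p⟫_ℝ p0
    (abs_pos.mpr hτ) (norm_nonneg p) (norm_nonneg X) hN hs
    (Real.sqrt_nonneg _) (Real.sq_sqrt hs.le)
    (Real.sqrt_nonneg _) (Real.sq_sqrt (by positivity))
    (sq_abs τ) (Real.sqrt_nonneg _) (Real.sq_sqrt hDnn)
    hcs hp0
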